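/- Let h be a smooth symmetric 2-tensor on Hⁿ and define u = (x¹)^{-(n+1)}(h - (trace_b h) b) as a matrix-valued function with components u^{ij}. Then the linearized scalar curvature operator satisfies P(h) = (x¹)^{n+1} (∂_i∂_j u^{ij} + ∂₁((x¹)⁻¹ u^{ii})), and moreover h can be recovered as h = (x¹)^{n+1}(u + (1-n)⁻¹ (trace_b u) b). -/

import Mathlib

open MeasureTheory
open scoped BigOperators

/-- Partial derivative in the `i`-th coordinate direction. -/
noncomputable def pd {n : ℕ} (i : Fin n) (f : (Fin n → ℝ) → ℝ) (x : Fin n → ℝ) : ℝ :=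
  fderiv ℝ f x (Pi.single i 1)

/-- The hyperbolic metric `b_{ij} = (x¹)⁻² δ_{ij}` on the upper half-space. -/
noncomputable def bmet {n : ℕ} [NeZero n] (x : Fin n → ℝ) (i j : Fin n) : ℝ :=
  ((x 0) ^ 2)⁻¹ * (if i = j then 1 else 0)

/-- The inverse hyperbolic metric `b^{ij} = (x¹)² δ^{ij}`. -/
noncomputable def binv {n : ℕ} [NeZero n] (x : Fin n → ℝ) (i j : Fin n) : ℝ :=
  (x 0) ^ 2 * (if i = j then 1 else 0)

/-- Christoffel symbols `Γᵏᵢⱼ = ½ bᵏˡ(∂ᵢ b_{jl} + ∂ⱼ b_{il} - ∂_l b_{ij})` of `bmet`. -/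
noncomputable def chris {n : ℕ} [NeZero n] (k i j : Fin n) (x : Fin n → ℝ) : ℝ :=
  (1/2) * ∑ l, binv x k l *
    (pd i (fun y => bmet y j l) x + pd j (fun y => bmet y i l) x - pd l (fun y => bmet y i j) x)

/-- Covariant derivative `(D_k h)_{ij}` of a symmetric 2-tensor `h`. -/
noncomputable def covD {n : ℕ} [NeZero n] (h : (Fin n → ℝ) → Fin n → Fin n → ℝ)
    (k i j : Fin n) (x : Fin n → ℝ) : ℝ :=
  pd k (fun y => h y i j) x - (∑ l, chris l k i x * h x l j) - (∑ l, chris l k j x * h x i l)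

/-- Second covariant derivative `(D_m D_k h)_{ij}` of a symmetric 2-tensor `h`. -/
noncomputable def covDD {n : ℕ} [NeZero n] (h : (Fin n → ℝ) → Fin n → Fin n → ℝ)
    (m k i j : Fin n) (x : Fin n → ℝ) : ℝ :=
  pd m (fun y => covD h k i j y) x - (∑ l, chris l m k x * covD h l i j x)
    - (∑ l, chris l m i x * covD h k l j x) - (∑ l, chris l m j x * covD h k i l x)

/-- The trace `b^{ij} h_{ij}` of a 2-tensor with respect to the hyperbolic metric. -/
noncomputable def trB {n : ℕ} [NeZero n] (h : (Fin n → ℝ) → Fin n → Fin n → ℝ)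
    (x : Fin n → ℝ) : ℝ :=
  ∑ i, ∑ j, binv x i j * h x i j

/-- The linearized scalar curvature operator
`P(h) = DⁱDʲh_{ij} - DⁱD_i hʲⱼ - Ric^{ij} h_{ij}` at the hyperbolic metric,
where `Ric = (1-n) b`. -/
noncomputable def Pop {n : ℕ} [NeZero n] (h : (Fin n → ℝ) → Fin n → Fin n → ℝ)
    (x : Fin n → ℝ) : ℝ :=
  (∑ a, ∑ c, ∑ i, ∑ j, binv x i a * binv x j c * covDD h a c i j x)
    - (∑ a, ∑ c, binv x a c *
        (pd a (fun y => pd c (fun z => trB h z) y) x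
          - ∑ l, chris l a c x * pd l (fun z => trB h z) x))
    - (1 - (n : ℝ)) * trB h x

/-- Raised components `h^{ij} = b^{ik} b^{jl} h_{kl}`. -/
noncomputable def raise {n : ℕ} [NeZero n] (h : (Fin n → ℝ) → Fin n → Fin n → ℝ)
    (x : Fin n → ℝ) (i j : Fin n) : ℝ :=
  ∑ k, ∑ l, binv x i k * binv x j l * h x k l

/-!- auxiliary development -/
set_option maxHeartbeats 1000000
set_option linter.unusedSectionVars false

section pdlemmas
variable {n : ℕ} {f g : (Fin n → ℝ) → ℝ} {x : Fin n → ℝ} {i : Fin n}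

theorem pd_congr (hfg : f =ᶠ[nhds x] g) : pd i f x = pd i g x := by
  unfold pd; rw [hfg.fderiv_eq]

theorem pd_add (hf : DifferentiableAt ℝ f x) (hg : DifferentiableAt ℝ g x) :
    pd i (fun y => f y + g y) x = pd i f x + pd i g x := by
  unfold pd; rw [fderiv_fun_add hf hg]; rfl

theorem pd_sub (hf : DifferentiableAt ℝ f x) (hg : DifferentiableAt ℝ g x) :
    pd i (fun y => f y - g y) x = pd i f x - pd i g x := by
  unfold pd; rw [fderiv_fun_sub hf hg]; rfl

theorem pd_mul (hf : DifferentiableAt ℝ f x) (hg : DifferentiableAt ℝ g x) :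
    pd i (fun y => f y * g y) x = pd i f x * g x + f x * pd i g x := by
  unfold pd; rw [fderiv_fun_mul hf hg]
  simp only [ContinuousLinearMap.add_apply, ContinuousLinearMap.smul_apply, smul_eq_mul]
  ring

theorem pd_const (c : ℝ) : pd i (fun _ => c) x = 0 := by
  unfold pd; rw [fderiv_fun_const]; rfl

theorem pd_const_mul (hf : DifferentiableAt ℝ f x) (c : ℝ) :
    pd i (fun y => c * f y) x = c * pd i f x := by
  unfold pd; rw [fderiv_const_mul hf]; rfl

theorem pd_sum {ι : Type*} (s : Finset ι) (F : ι → (Fin n → ℝ) → ℝ)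
    (hF : ∀ j ∈ s, DifferentiableAt ℝ (F j) x) :
    pd i (fun y => ∑ j ∈ s, F j y) x = ∑ j ∈ s, pd i (F j) x := by
  unfold pd; rw [fderiv_fun_sum hF]; simp

theorem hasFDerivAt_zpow_proj [NeZero n] (m : ℤ) (hx : x 0 ≠ 0) :
    HasFDerivAt (fun y : Fin n → ℝ => (y 0) ^ m)
      (((m : ℝ) * (x 0) ^ (m - 1)) •
        (ContinuousLinearMap.proj (R := ℝ) (φ := fun _ : Fin n => ℝ) 0)) x := by
  have := (hasDerivAt_zpow m (x 0) (Or.inl hx)).comp_hasFDerivAt x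
    (ContinuousLinearMap.proj (R := ℝ) (φ := fun _ : Fin n => ℝ) 0).hasFDerivAt
  exact this

theorem diff_zpow_proj [NeZero n] (m : ℤ) (hx : x 0 ≠ 0) :
    DifferentiableAt ℝ (fun y : Fin n → ℝ => (y 0) ^ m) x :=
  (hasFDerivAt_zpow_proj m hx).differentiableAt

theorem pd_zpow [NeZero n] (m : ℤ) (hx : x 0 ≠ 0) :
    pd i (fun y : Fin n → ℝ => (y 0) ^ m) x
      = (m : ℝ) * (x 0) ^ (m - 1) * (if i = 0 then 1 else 0) := by
  unfold pd
  rw [(hasFDerivAt_zpow_proj m hx).fderiv]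
  simp only [ContinuousLinearMap.smul_apply, ContinuousLinearMap.proj_apply, smul_eq_mul]
  rw [Pi.single_apply]
  simp [eq_comm]

end pdlemmas

set_option linter.unusedSectionVars false
section main
variable {n : ℕ} [NeZero n]

def del (i j : Fin n) : ℝ := if i = j then 1 else 0

@[simp] theorem del_self (i : Fin n) : del i i = 1 := by simp [del]
theorem del_comm (i j : Fin n) : del i j = del j i := by simp [del, eq_comm]

theorem sum_del_right (c : Fin n) (F : Fin n → ℝ) : ∑ i, del c i * F i = F c := by
  simp [del, Finset.sum_ite_eq]

theorem sum_del_left (c : Fin n) (F : Fin n → ℝ) : ∑ i, del i c * F i = F c := by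
  simp [del, Finset.sum_ite_eq']

theorem sumc (a b c : Fin n) (C1 C2 C3 : ℝ) (f : Fin n → ℝ) :
    ∑ l, (C1 * del a l + C2 * del b l + C3 * del l c) * f l
      = C1 * f a + C2 * f b + C3 * f c := by
  have : ∀ l, (C1 * del a l + C2 * del b l + C3 * del l c) * f l
      = del a l * (C1 * f l) + (del b l * (C2 * f l) + del l c * (C3 * f l)) := by
    intro l; ring
  rw [Finset.sum_congr rfl (fun l _ => this l), Finset.sum_add_distrib,
    Finset.sum_add_distrib, sum_del_right, sum_del_right, sum_del_left]
  ring

variable {x : Fin n → ℝ} {i j k l : Fin n}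

theorem bmet_eq (y : Fin n → ℝ) (i j : Fin n) : bmet y i j = (y 0) ^ (-2 : ℤ) * del i j := by
  rw [bmet, del, zpow_neg, zpow_two]; norm_num [sq]

theorem pd_bmet (hx : x 0 ≠ 0) :
    pd i (fun y => bmet y j l) x = -2 * (x 0) ^ (-3 : ℤ) * del i 0 * del j l := by
  have e : (fun y : Fin n → ℝ => bmet y j l) = fun y => del j l * (y 0) ^ (-2 : ℤ) := by
    funext y; rw [bmet_eq]; ring
  rw [e, pd_const_mul (diff_zpow_proj _ hx), pd_zpow _ hx]
  have : ((-2 : ℤ) - 1) = (-3 : ℤ) := by norm_num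
  rw [this]; push_cast; unfold del; ring

theorem chris_eq (hx : x 0 ≠ 0) (k i j : Fin n) :
    chris k i j x
      = -(x 0)⁻¹ * (del i 0 * del j k + del j 0 * del i k - del k 0 * del i j) := by
  have key : ∀ l, binv x k l *
      (pd i (fun y => bmet y j l) x + pd j (fun y => bmet y i l) x
        - pd l (fun y => bmet y i j) x)
      = del k l * ((x 0) ^ 2 *
          ((-2 * (x 0) ^ (-3 : ℤ) * del i 0 * del j l)
            + (-2 * (x 0) ^ (-3 : ℤ) * del j 0 * del i l)
            - (-2 * (x 0) ^ (-3 : ℤ) * del l 0 * del i j))) := by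
    intro l
    rw [binv, pd_bmet hx, pd_bmet hx, pd_bmet hx, ← del]; ring
  rw [chris, Finset.sum_congr rfl (fun l _ => key l), sum_del_right]
  have h23 : (x 0 : ℝ) ^ 2 * (x 0) ^ (-3 : ℤ) = (x 0)⁻¹ := by
    rw [← zpow_natCast (x 0) 2, ← zpow_add₀ hx]; norm_num
  have expand : (1:ℝ)/2 * ((x 0) ^ 2 *
      ((-2 * (x 0) ^ (-3 : ℤ) * del i 0 * del j k)
        + (-2 * (x 0) ^ (-3 : ℤ) * del j 0 * del i k)
        - (-2 * (x 0) ^ (-3 : ℤ) * del k 0 * del i j)))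
      = -((x 0) ^ 2 * (x 0) ^ (-3 : ℤ)) *
          (del i 0 * del j k + del j 0 * del i k - del k 0 * del i j) := by ring
  rw [expand, h23]

end main

section main
variable {n : ℕ} [NeZero n] (h : (Fin n → ℝ) → Fin n → Fin n → ℝ)

theorem isOpen_S : IsOpen {y : Fin n → ℝ | 0 < y 0} :=
  isOpen_lt continuous_const (continuous_apply 0)

theorem diff_h (hsmooth : ∀ i j, ContDiffOn ℝ (⊤ : ℕ∞) (fun x => h x i j) {y : Fin n → ℝ | 0 < y 0})
    (i j : Fin n) {y : Fin n → ℝ} (hy : 0 < y 0) :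
    DifferentiableAt ℝ (fun z => h z i j) y :=
  (((hsmooth i j).contDiffAt (isOpen_S.mem_nhds hy)).differentiableAt (by simp))

theorem diff_pdh (hsmooth : ∀ i j, ContDiffOn ℝ (⊤ : ℕ∞) (fun x => h x i j) {y : Fin n → ℝ | 0 < y 0})
    (k i j : Fin n) {y : Fin n → ℝ} (hy : 0 < y 0) :
    DifferentiableAt ℝ (fun z => pd k (fun w => h w i j) z) y := by
  have hc : ContDiffAt ℝ (⊤ : ℕ∞) (fun z => h z i j) y :=
    (hsmooth i j).contDiffAt (isOpen_S.mem_nhds hy)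
  have h1 : ContDiffAt ℝ (⊤ : ℕ∞) (fderiv ℝ (fun z => h z i j)) y := hc.fderiv_right (by simp)
  exact (h1.differentiableAt (by simp)).clm_apply (differentiableAt_const _)

theorem diff_comb5 {f1 f2 f3 f4 f5 : (Fin n → ℝ) → ℝ} {y : Fin n → ℝ}
    (d1 : DifferentiableAt ℝ f1 y) (d2 : DifferentiableAt ℝ f2 y)
    (d3 : DifferentiableAt ℝ f3 y) (d4 : DifferentiableAt ℝ f4 y)
    (d5 : DifferentiableAt ℝ f5 y) (c1 c2 c3 c4 c5 : ℝ) :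
    DifferentiableAt ℝ
      (fun z => c1 * f1 z + c2 * f2 z + c3 * f3 z + c4 * f4 z + c5 * f5 z) y :=
  (((((d1.const_mul c1).add (d2.const_mul c2)).add (d3.const_mul c3)).add
      (d4.const_mul c4)).add (d5.const_mul c5))

theorem pd_comb5 {f1 f2 f3 f4 f5 : (Fin n → ℝ) → ℝ} {y : Fin n → ℝ} {m : Fin n}
    (d1 : DifferentiableAt ℝ f1 y) (d2 : DifferentiableAt ℝ f2 y)
    (d3 : DifferentiableAt ℝ f3 y) (d4 : DifferentiableAt ℝ f4 y)
    (d5 : DifferentiableAt ℝ f5 y) (c1 c2 c3 c4 c5 : ℝ) :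
    pd m (fun z => c1 * f1 z + c2 * f2 z + c3 * f3 z + c4 * f4 z + c5 * f5 z) y
      = c1 * pd m f1 y + c2 * pd m f2 y + c3 * pd m f3 y + c4 * pd m f4 y
        + c5 * pd m f5 y := by
  rw [pd_add (((((d1.const_mul c1).fun_add (d2.const_mul c2)).fun_add (d3.const_mul c3)).fun_add
      (d4.const_mul c4))) (d5.const_mul c5),
    pd_add ((((d1.const_mul c1).fun_add (d2.const_mul c2)).fun_add (d3.const_mul c3)))
      (d4.const_mul c4),
    pd_add (((d1.const_mul c1).fun_add (d2.const_mul c2))) (d3.const_mul c3),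
    pd_add ((d1.const_mul c1)) (d2.const_mul c2),
    pd_const_mul d1, pd_const_mul d2, pd_const_mul d3, pd_const_mul d4, pd_const_mul d5]

theorem covD_eq {y : Fin n → ℝ} (hy : y 0 ≠ 0) (k i j : Fin n) :
    covD h k i j y
      = pd k (fun z => h z i j) y
        + (y 0)⁻¹ * (2 * del k 0 * h y i j + del i 0 * h y k j + del j 0 * h y i k
            - del k i * h y 0 j - del k j * h y i 0) := by
  have s1 : ∑ l, chris l k i y * h y l j
      = (-(y 0)⁻¹ * del k 0) * h y i j + (-(y 0)⁻¹ * del i 0) * h y k j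
        + ((y 0)⁻¹ * del k i) * h y 0 j := by
    rw [Finset.sum_congr rfl (fun l _ =>
      show chris l k i y * h y l j
        = ((-(y 0)⁻¹ * del k 0) * del i l + (-(y 0)⁻¹ * del i 0) * del k l
          + ((y 0)⁻¹ * del k i) * del l 0) * h y l j by
        rw [chris_eq hy l k i]; ring), sumc]
  have s2 : ∑ l, chris l k j y * h y i l
      = (-(y 0)⁻¹ * del k 0) * h y i j + (-(y 0)⁻¹ * del j 0) * h y i k
        + ((y 0)⁻¹ * del k j) * h y i 0 := by
    rw [Finset.sum_congr rfl (fun l _ =>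
      show chris l k j y * h y i l
        = ((-(y 0)⁻¹ * del k 0) * del j l + (-(y 0)⁻¹ * del j 0) * del k l
          + ((y 0)⁻¹ * del k j) * del l 0) * h y i l by
        rw [chris_eq hy l k j]; ring), sumc]
  rw [covD, s1, s2]; ring

theorem pd_covD (hsmooth : ∀ i j, ContDiffOn ℝ (⊤ : ℕ∞) (fun x => h x i j) {y : Fin n → ℝ | 0 < y 0})
    {x : Fin n → ℝ} (hx : 0 < x 0) (m k i j : Fin n) :
    pd m (fun y => covD h k i j y) x
      = pd m (fun y => pd k (fun z => h z i j) y) x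
        - (x 0) ^ (-2 : ℤ) * del m 0 *
            (2 * del k 0 * h x i j + del i 0 * h x k j + del j 0 * h x i k
              - del k i * h x 0 j - del k j * h x i 0)
        + (x 0) ^ (-1 : ℤ) *
            (2 * del k 0 * pd m (fun z => h z i j) x + del i 0 * pd m (fun z => h z k j) x
              + del j 0 * pd m (fun z => h z i k) x - del k i * pd m (fun z => h z 0 j) x
              - del k j * pd m (fun z => h z i 0) x) := by
  have hx' : x 0 ≠ 0 := ne_of_gt hx
  have ev : (fun y => covD h k i j y) =ᶠ[nhds x]
      (fun y => pd k (fun z => h z i j) y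
        + (y 0) ^ (-1 : ℤ) *
          ((2 * del k 0) * h y i j + del i 0 * h y k j + del j 0 * h y i k
            + (-(del k i)) * h y 0 j + (-(del k j)) * h y i 0)) := by
    filter_upwards [isOpen_S.mem_nhds hx] with y hy
    rw [covD_eq h (ne_of_gt hy), zpow_neg_one]
    ring
  have dA : DifferentiableAt ℝ
      (fun y => (2 * del k 0) * h y i j + del i 0 * h y k j + del j 0 * h y i k
        + (-(del k i)) * h y 0 j + (-(del k j)) * h y i 0) x :=
    diff_comb5 (diff_h h hsmooth i j hx) (diff_h h hsmooth k j hx) (diff_h h hsmooth i k hx)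
      (diff_h h hsmooth 0 j hx) (diff_h h hsmooth i 0 hx) _ _ _ _ _
  rw [pd_congr ev, pd_add (diff_pdh h hsmooth k i j hx) ((diff_zpow_proj _ hx').fun_mul dA),
    pd_mul (diff_zpow_proj _ hx') dA, pd_zpow _ hx',
    pd_comb5 (diff_h h hsmooth i j hx) (diff_h h hsmooth k j hx) (diff_h h hsmooth i k hx)
      (diff_h h hsmooth 0 j hx) (diff_h h hsmooth i 0 hx)]
  rw [show ((-1 : ℤ) - 1) = (-2 : ℤ) by norm_num,
    show (if m = 0 then (1:ℝ) else 0) = del m 0 from rfl]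
  push_cast
  ring

end main

section main
variable {n : ℕ} [NeZero n] (h : (Fin n → ℝ) → Fin n → Fin n → ℝ)

-- double sum collapse helpers
theorem sum2_left (F : Fin n → Fin n → ℝ) : (∑ i, ∑ j, del i 0 * F i j) = ∑ j, F 0 j := by
  have : ∀ i, (∑ j, del i 0 * F i j) = del i 0 * ∑ j, F i j := by
    intro i; rw [Finset.mul_sum]
  rw [Finset.sum_congr rfl (fun i _ => this i), sum_del_left 0 (fun i => ∑ j, F i j)]

theorem sum2_right (F : Fin n → Fin n → ℝ) : (∑ i, ∑ j, del j 0 * F i j) = ∑ i, F i 0 := by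
  exact Finset.sum_congr rfl (fun i _ => sum_del_left 0 (F i))

theorem sum2_diag (F : Fin n → Fin n → ℝ) : (∑ i, ∑ j, del i j * F i j) = ∑ i, F i i := by
  exact Finset.sum_congr rfl (fun i _ => sum_del_right i (F i))

theorem sum2_const (F : Fin n → ℝ) : (∑ _i : Fin n, ∑ j, F j) = n * ∑ j, F j := by
  rw [Finset.sum_const, Finset.card_univ, Fintype.card_fin, nsmul_eq_mul]

theorem sum_split5 (A B C D E : Fin n → ℝ) :
    (∑ i, (A i + B i + C i + D i + E i))
      = (∑ i, A i) + (∑ i, B i) + (∑ i, C i) + (∑ i, D i) + (∑ i, E i) := by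
  simp [Finset.sum_add_distrib]

theorem covDD_eq {x : Fin n → ℝ} (hx : x 0 ≠ 0) (m k i j : Fin n) :
    covDD h m k i j x
      = pd m (fun y => covD h k i j y) x
        + (x 0)⁻¹ * (3 * del m 0 * covD h k i j x + del k 0 * covD h m i j x
            - del m k * covD h 0 i j x + del i 0 * covD h k m j x
            - del m i * covD h k 0 j x + del j 0 * covD h k i m x
            - del m j * covD h k i 0 x) := by
  have s1 : ∑ l, chris l m k x * covD h l i j x
      = (-(x 0)⁻¹ * del m 0) * covD h k i j x + (-(x 0)⁻¹ * del k 0) * covD h m i j x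
        + ((x 0)⁻¹ * del m k) * covD h 0 i j x := by
    rw [Finset.sum_congr rfl (fun l _ =>
      show chris l m k x * covD h l i j x
        = ((-(x 0)⁻¹ * del m 0) * del k l + (-(x 0)⁻¹ * del k 0) * del m l
          + ((x 0)⁻¹ * del m k) * del l 0) * covD h l i j x by
        rw [chris_eq hx l m k]; ring), sumc]
  have s2 : ∑ l, chris l m i x * covD h k l j x
      = (-(x 0)⁻¹ * del m 0) * covD h k i j x + (-(x 0)⁻¹ * del i 0) * covD h k m j x
        + ((x 0)⁻¹ * del m i) * covD h k 0 j x := by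
    rw [Finset.sum_congr rfl (fun l _ =>
      show chris l m i x * covD h k l j x
        = ((-(x 0)⁻¹ * del m 0) * del i l + (-(x 0)⁻¹ * del i 0) * del m l
          + ((x 0)⁻¹ * del m i) * del l 0) * covD h k l j x by
        rw [chris_eq hx l m i]; ring), sumc]
  have s3 : ∑ l, chris l m j x * covD h k i l x
      = (-(x 0)⁻¹ * del m 0) * covD h k i j x + (-(x 0)⁻¹ * del j 0) * covD h k i m x
        + ((x 0)⁻¹ * del m j) * covD h k i 0 x := by
    rw [Finset.sum_congr rfl (fun l _ =>
      show chris l m j x * covD h k i l x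
        = ((-(x 0)⁻¹ * del m 0) * del j l + (-(x 0)⁻¹ * del j 0) * del m l
          + ((x 0)⁻¹ * del m j) * del l 0) * covD h k i l x by
        rw [chris_eq hx l m j]; ring), sumc]
  rw [covDD, s1, s2, s3]; ring

-- Stage A
theorem sumDD {x : Fin n → ℝ} (hx : x 0 ≠ 0) :
    (∑ i, ∑ j, covDD h i j i j x)
      = (∑ i, ∑ j, pd i (fun y => covD h j i j y) x)
        + ((4 : ℝ) - n) * (x 0)⁻¹ * ∑ k, covD h k 0 k x := by
  have key : ∀ i j : Fin n, covDD h i j i j x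
      = pd i (fun y => covD h j i j y) x
        + del i 0 * ((x 0)⁻¹ * (4 * covD h j i j x))
        + del j 0 * ((x 0)⁻¹ * (covD h i i j x + covD h j i i x))
        + del i j * ((x 0)⁻¹ * (-(covD h 0 i j x) - covD h j i 0 x))
        + (x 0)⁻¹ * (-(covD h j 0 j x)) := by
    intro i j
    rw [covDD_eq h hx i j i j, del_self]
    ring
  rw [Finset.sum_congr rfl (fun i _ => Finset.sum_congr rfl (fun j _ => key i j))]
  rw [Finset.sum_congr rfl (fun i _ => sum_split5 _ _ _ _ _), sum_split5,
    sum2_left (fun i j => (x 0)⁻¹ * (4 * covD h j i j x)),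
    sum2_right (fun i j => (x 0)⁻¹ * (covD h i i j x + covD h j i i x)),
    sum2_diag (fun i j => (x 0)⁻¹ * (-(covD h 0 i j x) - covD h j i 0 x)),
    sum2_const (fun j => (x 0)⁻¹ * (-(covD h j 0 j x)))]
  have e1 : (∑ j, (x 0)⁻¹ * (4 * covD h j 0 j x)) = (x 0)⁻¹ * 4 * ∑ j, covD h j 0 j x := by
    rw [Finset.mul_sum]; exact Finset.sum_congr rfl (fun j _ => by ring)
  have e2 : (∑ i, (x 0)⁻¹ * (covD h i i 0 x + covD h 0 i i x))
      = (x 0)⁻¹ * ((∑ i, covD h i i 0 x) + ∑ i, covD h 0 i i x) := by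
    rw [← Finset.sum_add_distrib, Finset.mul_sum]
  have e3 : (∑ i, (x 0)⁻¹ * (-(covD h 0 i i x) - covD h i i 0 x))
      = (x 0)⁻¹ * (-((∑ i, covD h 0 i i x) + ∑ i, covD h i i 0 x)) := by
    rw [← Finset.mul_sum]
    congr 1
    rw [neg_add, ← Finset.sum_neg_distrib, ← Finset.sum_neg_distrib, ← Finset.sum_add_distrib]
    exact Finset.sum_congr rfl (fun i _ => by ring)
  have e4 : (∑ j, (x 0)⁻¹ * (-(covD h j 0 j x))) = -((x 0)⁻¹ * ∑ j, covD h j 0 j x) := by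
    rw [Finset.mul_sum, ← Finset.sum_neg_distrib]
    exact Finset.sum_congr rfl (fun j _ => by ring)
  rw [e1, e2, e3, e4]
  ring

theorem sum2_inner_const (G : Fin n → ℝ) : (∑ i, ∑ _j : Fin n, G i) = (n : ℝ) * ∑ i, G i := by
  rw [Finset.mul_sum]
  exact Finset.sum_congr rfl (fun i _ => by
    rw [Finset.sum_const, Finset.card_univ, Fintype.card_fin, nsmul_eq_mul])

theorem pdh_swap (hsym : ∀ x i j, h x i j = h x j i) (m a b : Fin n) (x : Fin n → ℝ) :
    pd m (fun z => h z a b) x = pd m (fun z => h z b a) x := by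
  rw [show (fun z => h z a b) = (fun z => h z b a) from funext (fun z => hsym z a b)]

theorem sum_split3 (A B C : Fin n → ℝ) :
    (∑ i, (A i + B i + C i)) = (∑ i, A i) + (∑ i, B i) + (∑ i, C i) := by
  simp [Finset.sum_add_distrib]

theorem sum_split4 (A B C D : Fin n → ℝ) :
    (∑ i, (A i + B i + C i + D i))
      = (∑ i, A i) + (∑ i, B i) + (∑ i, C i) + (∑ i, D i) := by
  simp [Finset.sum_add_distrib]

-- Stage C
theorem sum_covD0 {x : Fin n → ℝ} (hx : x 0 ≠ 0) :
    (∑ k, covD h k 0 k x)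
      = (∑ k, pd k (fun z => h z 0 k) x)
        + (x 0)⁻¹ * (2 * h x 0 0 + (∑ k, h x k k) - n * h x 0 0) := by
  have key : ∀ k : Fin n, covD h k 0 k x
      = pd k (fun z => h z 0 k) x + del k 0 * ((x 0)⁻¹ * (2 * h x 0 k))
        + (x 0)⁻¹ * h x k k + (x 0)⁻¹ * (-(h x 0 0)) := by
    intro k
    rw [covD_eq h hx k 0 k]
    simp only [del_self]
    ring
  rw [Finset.sum_congr rfl (fun k _ => key k), sum_split4,
    sum_del_left 0 (fun k => (x 0)⁻¹ * (2 * h x 0 k)), ← Finset.mul_sum, ← Finset.mul_sum,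
    Finset.sum_const, Finset.card_univ, Fintype.card_fin, nsmul_eq_mul]
  ring

-- Stage B
theorem sum_pd_covD (hsym : ∀ x i j, h x i j = h x j i)
    (hsmooth : ∀ i j, ContDiffOn ℝ (⊤ : ℕ∞) (fun x => h x i j) {y : Fin n → ℝ | 0 < y 0})
    {x : Fin n → ℝ} (hx : 0 < x 0) :
    (∑ i, ∑ j, pd i (fun y => covD h j i j y) x)
      = (∑ i, ∑ j, pd i (fun y => pd j (fun z => h z i j) y) x)
        - (x 0) ^ (-2 : ℤ) * (2 * h x 0 0 + (∑ k, h x k k) - n * h x 0 0)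
        + (x 0) ^ (-1 : ℤ) * ((2 - n) * (∑ k, pd k (fun z => h z 0 k) x)
            + (∑ k, pd 0 (fun z => h z k k) x)) := by
  have key : ∀ i j : Fin n, pd i (fun y => covD h j i j y) x
      = pd i (fun y => pd j (fun z => h z i j) y) x
        + del i 0 * (-((x 0) ^ (-2 : ℤ)) * (3 * del j 0 * h x i j - del j i * h x 0 j
            + del i 0 * h x j j - h x i 0) + (x 0) ^ (-1 : ℤ) * pd i (fun z => h z j j) x)
        + del j 0 * ((x 0) ^ (-1 : ℤ) * (3 * pd i (fun z => h z i j) x))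
        + del i j * ((x 0) ^ (-1 : ℤ) * (-(pd i (fun z => h z 0 j) x)))
        + (x 0) ^ (-1 : ℤ) * (-(pd i (fun z => h z i 0) x)) := by
    intro i j
    rw [pd_covD h hsmooth hx i j i j]
    simp only [del_self]
    rw [del_comm j i]
    ring
  rw [Finset.sum_congr rfl (fun i _ => Finset.sum_congr rfl (fun j _ => key i j))]
  rw [Finset.sum_congr rfl (fun i _ => sum_split5 _ _ _ _ _), sum_split5,
    sum2_left (fun i j => -((x 0) ^ (-2 : ℤ)) * (3 * del j 0 * h x i j - del j i * h x 0 j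
      + del i 0 * h x j j - h x i 0) + (x 0) ^ (-1 : ℤ) * pd i (fun z => h z j j) x),
    sum2_right (fun i j => (x 0) ^ (-1 : ℤ) * (3 * pd i (fun z => h z i j) x)),
    sum2_diag (fun i j => (x 0) ^ (-1 : ℤ) * (-(pd i (fun z => h z 0 j) x))),
    sum2_inner_const (fun i => (x 0) ^ (-1 : ℤ) * (-(pd i (fun z => h z i 0) x)))]
  have e1 : (∑ j, (-((x 0) ^ (-2 : ℤ)) * (3 * del j 0 * h x 0 j - del j 0 * h x 0 j
        + del (0 : Fin n) 0 * h x j j - h x 0 0) + (x 0) ^ (-1 : ℤ) * pd 0 (fun z => h z j j) x))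
      = -((x 0) ^ (-2 : ℤ)) * (2 * h x 0 0 + (∑ k, h x k k) - n * h x 0 0)
        + (x 0) ^ (-1 : ℤ) * (∑ k, pd 0 (fun z => h z k k) x) := by
    have reshape : ∀ j : Fin n, (-((x 0) ^ (-2 : ℤ)) * (3 * del j 0 * h x 0 j
          - del j 0 * h x 0 j + del (0 : Fin n) 0 * h x j j - h x 0 0)
            + (x 0) ^ (-1 : ℤ) * pd 0 (fun z => h z j j) x)
        = del j 0 * (-((x 0) ^ (-2 : ℤ)) * (2 * h x 0 j))
          + (-((x 0) ^ (-2 : ℤ)) * (h x j j - h x 0 0))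
          + (x 0) ^ (-1 : ℤ) * pd 0 (fun z => h z j j) x := by
      intro j; simp only [del_self]; ring
    rw [Finset.sum_congr rfl (fun j _ => reshape j), sum_split3,
      sum_del_left 0 (fun j => -((x 0) ^ (-2 : ℤ)) * (2 * h x 0 j)),
      ← Finset.mul_sum, ← Finset.mul_sum]
    have e11 : (∑ j, (h x j j - h x 0 0)) = (∑ k, h x k k) - n * h x 0 0 := by
      rw [Finset.sum_sub_distrib, Finset.sum_const, Finset.card_univ, Fintype.card_fin,
        nsmul_eq_mul]
    rw [e11]; ring
  have e2 : (∑ i, (x 0) ^ (-1 : ℤ) * (3 * pd i (fun z => h z i 0) x))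
      = (x 0) ^ (-1 : ℤ) * 3 * (∑ k, pd k (fun z => h z 0 k) x) := by
    rw [mul_assoc, Finset.mul_sum, Finset.mul_sum]
    exact Finset.sum_congr rfl (fun i _ => by rw [pdh_swap h hsym i i 0 x]; try ring)
  have e3 : (∑ i, (x 0) ^ (-1 : ℤ) * (-(pd i (fun z => h z 0 i) x)))
      = -((x 0) ^ (-1 : ℤ) * (∑ k, pd k (fun z => h z 0 k) x)) := by
    rw [← Finset.mul_sum, Finset.sum_neg_distrib]
    ring
  have e4 : ((n : ℝ) * ∑ i, (x 0) ^ (-1 : ℤ) * (-(pd i (fun z => h z i 0) x)))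
      = -((n : ℝ) * ((x 0) ^ (-1 : ℤ) * (∑ k, pd k (fun z => h z 0 k) x))) := by
    rw [Finset.sum_congr rfl (fun i _ =>
        show (x 0) ^ (-1 : ℤ) * (-(pd i (fun z => h z i 0) x))
          = -((x 0) ^ (-1 : ℤ) * pd i (fun z => h z 0 i) x) by
        rw [pdh_swap h hsym i i 0 x]; ring),
      Finset.sum_neg_distrib, ← Finset.mul_sum]
    ring
  rw [e1, e2, e3, e4]
  ring

theorem zp2 (a : ℝ) : a ^ (2 : ℤ) = a ^ 2 := by
  rw [show (2:ℤ) = ((2:ℕ):ℤ) by norm_num, zpow_natCast]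

-- Pop first term collapse
theorem term1_eq {x : Fin n → ℝ} :
    (∑ a, ∑ c, ∑ i, ∑ j, binv x i a * binv x j c * covDD h a c i j x)
      = (x 0) ^ 4 * ∑ a, ∑ c, covDD h a c a c x := by
  have inner : ∀ a c : Fin n,
      (∑ i, ∑ j, binv x i a * binv x j c * covDD h a c i j x)
        = (x 0) ^ 4 * covDD h a c a c x := by
    intro a c
    rw [Finset.sum_congr rfl (fun i _ => by
      rw [Finset.sum_congr rfl (fun j _ =>
        show binv x i a * binv x j c * covDD h a c i j x
          = del j c * (del i a * ((x 0) ^ 4 * covDD h a c i j x)) by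
          simp only [binv, del]; split_ifs <;> ring),
        sum_del_left c (fun j => del i a * ((x 0) ^ 4 * covDD h a c i j x))]),
      sum_del_left a (fun i => (x 0) ^ 4 * covDD h a c i c x)]
  rw [Finset.sum_congr rfl (fun a _ => Finset.sum_congr rfl (fun c _ => inner a c)),
    Finset.mul_sum]
  exact Finset.sum_congr rfl (fun a _ => (Finset.mul_sum _ _ _).symm)

-- trB closed form
theorem trB_fun (y : Fin n → ℝ) : trB h y = (y 0) ^ 2 * ∑ k, h y k k := by
  rw [trB, Finset.sum_congr rfl (fun i _ => by
    rw [Finset.sum_congr rfl (fun j _ =>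
      show binv y i j * h y i j = del i j * ((y 0) ^ 2 * h y i j) by
        simp only [binv, del]; split_ifs <;> ring),
      sum_del_right i (fun j => (y 0) ^ 2 * h y i j)]), Finset.mul_sum]

theorem diff_sumhkk
    (hsmooth : ∀ i j, ContDiffOn ℝ (⊤ : ℕ∞) (fun x => h x i j) {y : Fin n → ℝ | 0 < y 0})
    {y : Fin n → ℝ} (hy : 0 < y 0) :
    DifferentiableAt ℝ (fun z => ∑ k, h z k k) y := by
  apply DifferentiableAt.fun_sum
  exact fun k _ => diff_h h hsmooth k k hy

theorem diff_sumpdh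
    (hsmooth : ∀ i j, ContDiffOn ℝ (⊤ : ℕ∞) (fun x => h x i j) {y : Fin n → ℝ | 0 < y 0})
    (a : Fin n) {y : Fin n → ℝ} (hy : 0 < y 0) :
    DifferentiableAt ℝ (fun z => ∑ k, pd a (fun w => h w k k) z) y := by
  apply DifferentiableAt.fun_sum
  exact fun k _ => diff_pdh h hsmooth a k k hy

theorem pd_trB
    (hsmooth : ∀ i j, ContDiffOn ℝ (⊤ : ℕ∞) (fun x => h x i j) {y : Fin n → ℝ | 0 < y 0})
    {y : Fin n → ℝ} (hy : 0 < y 0) (l : Fin n) :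
    pd l (fun z => trB h z) y
      = 2 * (y 0) * del l 0 * (∑ k, h y k k)
        + (y 0) ^ 2 * ∑ k, pd l (fun z => h z k k) y := by
  have hy' : y 0 ≠ 0 := ne_of_gt hy
  have e : (fun z : Fin n → ℝ => trB h z) = fun z => (z 0) ^ (2 : ℤ) * ∑ k, h z k k := by
    funext z; rw [trB_fun, zp2]
  rw [e, pd_mul (diff_zpow_proj 2 hy') (diff_sumhkk h hsmooth hy), pd_zpow 2 hy',
    pd_sum Finset.univ (fun k z => h z k k) (fun k _ => diff_h h hsmooth k k hy)]
  rw [show ((2 : ℤ) - 1) = (1 : ℤ) by norm_num, zpow_one, zp2 (y 0),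
    show (if l = 0 then (1:ℝ) else 0) = del l 0 from rfl]
  push_cast; ring

theorem pd_pd_trB
    (hsmooth : ∀ i j, ContDiffOn ℝ (⊤ : ℕ∞) (fun x => h x i j) {y : Fin n → ℝ | 0 < y 0})
    {x : Fin n → ℝ} (hx : 0 < x 0) (a : Fin n) :
    pd a (fun y => pd a (fun z => trB h z) y) x
      = 2 * del a 0 * (del a 0 * (∑ k, h x k k)
            + (x 0) * ∑ k, pd a (fun z => h z k k) x)
        + 2 * (x 0) * del a 0 * (∑ k, pd a (fun z => h z k k) x)
        + (x 0) ^ 2 * ∑ k, pd a (fun y => pd a (fun z => h z k k) y) x := by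
  have hx' : x 0 ≠ 0 := ne_of_gt hx
  have ev : (fun y => pd a (fun z => trB h z) y) =ᶠ[nhds x]
      (fun y => (2 * del a 0) * ((y 0) ^ (1 : ℤ) * ∑ k, h y k k)
        + (y 0) ^ (2 : ℤ) * ∑ k, pd a (fun z => h z k k) y) := by
    filter_upwards [isOpen_S.mem_nhds hx] with y hy
    rw [pd_trB h hsmooth hy a, zpow_one, ← zp2 (y 0)]
    ring
  rw [pd_congr ev, pd_add
      (((diff_zpow_proj 1 hx').fun_mul (diff_sumhkk h hsmooth hx)).const_mul _)
      ((diff_zpow_proj 2 hx').fun_mul (diff_sumpdh h hsmooth a hx)),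
    pd_const_mul ((diff_zpow_proj 1 hx').fun_mul (diff_sumhkk h hsmooth hx)),
    pd_mul (diff_zpow_proj 1 hx') (diff_sumhkk h hsmooth hx),
    pd_mul (diff_zpow_proj 2 hx') (diff_sumpdh h hsmooth a hx),
    pd_zpow 1 hx', pd_zpow 2 hx',
    pd_sum Finset.univ (fun k z => h z k k) (fun k _ => diff_h h hsmooth k k hx),
    pd_sum Finset.univ (fun k z => pd a (fun w => h w k k) z)
      (fun k _ => diff_pdh h hsmooth a k k hx)]
  rw [show ((1 : ℤ) - 1) = (0 : ℤ) by norm_num, show ((2 : ℤ) - 1) = (1 : ℤ) by norm_num,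
    zpow_zero, zpow_one]
  simp only [show (if a = 0 then (1:ℝ) else 0) = del a 0 from rfl,
    zp2 (x 0)]
  push_cast; ring

-- Pop second term
theorem term2_eq
    (hsmooth : ∀ i j, ContDiffOn ℝ (⊤ : ℕ∞) (fun x => h x i j) {y : Fin n → ℝ | 0 < y 0})
    {x : Fin n → ℝ} (hx : 0 < x 0) :
    (∑ a, ∑ c, binv x a c *
        (pd a (fun y => pd c (fun z => trB h z) y) x
          - ∑ l, chris l a c x * pd l (fun z => trB h z) x))
      = (x 0) ^ 2 * ((2 * (∑ k, h x k k) + 4 * (x 0) * (∑ k, pd 0 (fun z => h z k k) x)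
            + (x 0) ^ 2 * (∑ a, ∑ k, pd a (fun y => pd a (fun z => h z k k) y) x))
          + (2 - (n : ℝ)) * (2 * (∑ k, h x k k)
              + (x 0) * (∑ k, pd 0 (fun z => h z k k) x))) := by
  have hx' : x 0 ≠ 0 := ne_of_gt hx
  -- collapse binv over c
  have col : ∀ a : Fin n, (∑ c, binv x a c *
      (pd a (fun y => pd c (fun z => trB h z) y) x
        - ∑ l, chris l a c x * pd l (fun z => trB h z) x))
      = (x 0) ^ 2 * (pd a (fun y => pd a (fun z => trB h z) y) x
          - ∑ l, chris l a a x * pd l (fun z => trB h z) x) := by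
    intro a
    rw [Finset.sum_congr rfl (fun c _ =>
      show binv x a c * (pd a (fun y => pd c (fun z => trB h z) y) x
          - ∑ l, chris l a c x * pd l (fun z => trB h z) x)
        = del a c * ((x 0) ^ 2 * (pd a (fun y => pd c (fun z => trB h z) y) x
            - ∑ l, chris l a c x * pd l (fun z => trB h z) x)) by
        simp only [binv, del]; split_ifs <;> ring),
      sum_del_right a (fun c => (x 0) ^ 2 * (pd a (fun y => pd c (fun z => trB h z) y) x
        - ∑ l, chris l a c x * pd l (fun z => trB h z) x))]
  -- chris sum
  have chrisSum : ∀ a : Fin n, (∑ l, chris l a a x * pd l (fun z => trB h z) x)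
      = -2 * (x 0)⁻¹ * del a 0 * pd a (fun z => trB h z) x
        + (x 0)⁻¹ * pd 0 (fun z => trB h z) x := by
    intro a
    rw [Finset.sum_congr rfl (fun l _ =>
      show chris l a a x * pd l (fun z => trB h z) x
        = ((-(x 0)⁻¹ * del a 0) * del a l + (-(x 0)⁻¹ * del a 0) * del a l
          + ((x 0)⁻¹ * 1) * del l 0) * pd l (fun z => trB h z) x by
        rw [chris_eq hx' l a a, del_self]; ring), sumc]
    ring
  rw [Finset.sum_congr rfl (fun a _ => col a)]
  have key : ∀ a : Fin n, (x 0) ^ 2 * (pd a (fun y => pd a (fun z => trB h z) y) x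
      - ∑ l, chris l a a x * pd l (fun z => trB h z) x)
      = del a 0 * ((x 0) ^ 2 * (2 * (del a 0 * (∑ k, h x k k)
            + (x 0) * ∑ k, pd a (fun z => h z k k) x)
          + 2 * (x 0) * (∑ k, pd a (fun z => h z k k) x)
          + 2 * (x 0)⁻¹ * pd a (fun z => trB h z) x))
        + (x 0) ^ 2 * ((x 0) ^ 2 * ∑ k, pd a (fun y => pd a (fun z => h z k k) y) x)
        + (x 0) ^ 2 * (-(x 0)⁻¹ * pd 0 (fun z => trB h z) x) := by
    intro a
    rw [chrisSum a, pd_pd_trB h hsmooth hx a]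
    ring
  rw [Finset.sum_congr rfl (fun a _ => key a), sum_split3,
    sum_del_left 0 (fun a => (x 0) ^ 2 * (2 * (del a 0 * (∑ k, h x k k)
        + (x 0) * ∑ k, pd a (fun z => h z k k) x)
      + 2 * (x 0) * (∑ k, pd a (fun z => h z k k) x)
      + 2 * (x 0)⁻¹ * pd a (fun z => trB h z) x)),
    ← Finset.mul_sum, ← Finset.mul_sum, Finset.sum_const, Finset.card_univ,
    Fintype.card_fin, nsmul_eq_mul, del_self]
  rw [pd_trB h hsmooth hx 0, del_self]
  have exp : (x 0) ^ 2 * ∑ a, ∑ k, pd a (fun y => pd a (fun z => h z k k) y) x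
      = ∑ a, (x 0) ^ 2 * ∑ k, pd a (fun y => pd a (fun z => h z k k) y) x :=
    Finset.mul_sum _ _ _
  field_simp
  ring

-- RHS: raise u closed form
theorem raise_fun (u : (Fin n → ℝ) → Fin n → Fin n → ℝ)
    (hu : ∀ x i j, u x i j = ((x 0) ^ (n + 1))⁻¹ * (h x i j - trB h x * bmet x i j))
    {y : Fin n → ℝ} (hy : y 0 ≠ 0) (i j : Fin n) :
    raise u y i j = (y 0) ^ ((3 : ℤ) - n) * (h y i j - del i j * ∑ k, h y k k) := by
  have col : raise u y i j = (y 0) ^ 4 * u y i j := by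
    rw [raise, Finset.sum_congr rfl (fun k _ => by
      rw [Finset.sum_congr rfl (fun l _ =>
        show binv y i k * binv y j l * u y k l
          = del j l * (del i k * ((y 0) ^ 4 * u y k l)) by
          simp only [binv, del]; split_ifs <;> ring),
        sum_del_right j (fun l => del i k * ((y 0) ^ 4 * u y k l))]),
      sum_del_right i (fun k => (y 0) ^ 4 * u y k j)]
  rw [col, hu y i j, trB_fun, bmet]
  have e4 : ((y 0 : ℝ)) ^ 4 * ((y 0) ^ (n + 1))⁻¹ = (y 0) ^ ((3 : ℤ) - n) := by
    rw [← zpow_natCast (y 0) 4, ← zpow_natCast (y 0) (n + 1), ← zpow_neg,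
      ← zpow_add₀ hy]
    congr 1; push_cast; ring
  have ee : (y 0 : ℝ) ^ 2 * (∑ k, h y k k) * (((y 0) ^ 2)⁻¹ * (if i = j then 1 else 0))
      = del i j * ∑ k, h y k k := by
    rw [show (if i = j then (1:ℝ) else 0) = del i j from rfl]
    field_simp
  rw [ee, ← mul_assoc, e4]

theorem sum_raise (u : (Fin n → ℝ) → Fin n → Fin n → ℝ)
    (hu : ∀ x i j, u x i j = ((x 0) ^ (n + 1))⁻¹ * (h x i j - trB h x * bmet x i j))
    {y : Fin n → ℝ} (hy : y 0 ≠ 0) :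
    (∑ i, raise u y i i)
      = (y 0) ^ ((3 : ℤ) - n) * ((1 - (n : ℝ)) * ∑ k, h y k k) := by
  rw [Finset.sum_congr rfl (fun i _ => by
    rw [raise_fun h u hu hy i i, del_self])]
  rw [← Finset.mul_sum, Finset.sum_sub_distrib, Finset.sum_const, Finset.card_univ,
    Fintype.card_fin, nsmul_eq_mul]
  ring

theorem diff_g
    (hsmooth : ∀ i j, ContDiffOn ℝ (⊤ : ℕ∞) (fun x => h x i j) {y : Fin n → ℝ | 0 < y 0})
    (i j : Fin n) {y : Fin n → ℝ} (hy : 0 < y 0) :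
    DifferentiableAt ℝ (fun z => h z i j - del i j * ∑ k, h z k k) y :=
  (diff_h h hsmooth i j hy).sub ((diff_sumhkk h hsmooth hy).const_mul _)

theorem diff_pg
    (hsmooth : ∀ i j, ContDiffOn ℝ (⊤ : ℕ∞) (fun x => h x i j) {y : Fin n → ℝ | 0 < y 0})
    (m i j : Fin n) {y : Fin n → ℝ} (hy : 0 < y 0) :
    DifferentiableAt ℝ
      (fun z => pd m (fun w => h w i j) z - del i j * ∑ k, pd m (fun w => h w k k) z) y :=
  (diff_pdh h hsmooth m i j hy).sub ((diff_sumpdh h hsmooth m hy).const_mul _)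

theorem pd_raise (u : (Fin n → ℝ) → Fin n → Fin n → ℝ)
    (hu : ∀ x i j, u x i j = ((x 0) ^ (n + 1))⁻¹ * (h x i j - trB h x * bmet x i j))
    (hsmooth : ∀ i j, ContDiffOn ℝ (⊤ : ℕ∞) (fun x => h x i j) {y : Fin n → ℝ | 0 < y 0})
    {y : Fin n → ℝ} (hy : 0 < y 0) (m i j : Fin n) :
    pd m (fun z => raise u z i j) y
      = ((3 : ℝ) - n) * (y 0) ^ ((2 : ℤ) - n) * del m 0
          * (h y i j - del i j * ∑ k, h y k k)
        + (y 0) ^ ((3 : ℤ) - n) *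
            (pd m (fun z => h z i j) y - del i j * ∑ k, pd m (fun z => h z k k) y) := by
  have hy' : y 0 ≠ 0 := ne_of_gt hy
  have ev : (fun z => raise u z i j) =ᶠ[nhds y]
      (fun z => (z 0) ^ ((3 : ℤ) - n) * (h z i j - del i j * ∑ k, h z k k)) := by
    filter_upwards [isOpen_S.mem_nhds hy] with z hz
    exact raise_fun h u hu (ne_of_gt hz) i j
  rw [pd_congr ev, pd_mul (diff_zpow_proj _ hy') (diff_g h hsmooth i j hy),
    pd_zpow _ hy',
    pd_sub (diff_h h hsmooth i j hy) ((diff_sumhkk h hsmooth hy).const_mul _),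
    pd_const_mul (diff_sumhkk h hsmooth hy),
    pd_sum Finset.univ (fun k z => h z k k) (fun k _ => diff_h h hsmooth k k hy)]
  rw [show ((3 : ℤ) - n - 1) = ((2 : ℤ) - n) by ring,
    show (if m = 0 then (1:ℝ) else 0) = del m 0 from rfl]
  push_cast; ring

theorem pd_pd_raise (u : (Fin n → ℝ) → Fin n → Fin n → ℝ)
    (hu : ∀ x i j, u x i j = ((x 0) ^ (n + 1))⁻¹ * (h x i j - trB h x * bmet x i j))
    (hsmooth : ∀ i j, ContDiffOn ℝ (⊤ : ℕ∞) (fun x => h x i j) {y : Fin n → ℝ | 0 < y 0})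
    {x : Fin n → ℝ} (hx : 0 < x 0) (i j : Fin n) :
    pd i (fun y => pd j (fun z => raise u z i j) y) x
      = (((3 : ℝ) - n) * del j 0) *
          ((((2 : ℝ) - n) * (x 0) ^ ((1 : ℤ) - n) * del i 0)
              * (h x i j - del i j * ∑ k, h x k k)
            + (x 0) ^ ((2 : ℤ) - n) *
              (pd i (fun z => h z i j) x - del i j * ∑ k, pd i (fun z => h z k k) x))
        + ((((3 : ℝ) - n) * (x 0) ^ ((2 : ℤ) - n) * del i 0)
              * (pd j (fun z => h z i j) x - del i j * ∑ k, pd j (fun z => h z k k) x)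
            + (x 0) ^ ((3 : ℤ) - n) *
              (pd i (fun y => pd j (fun z => h z i j) y) x
                - del i j * ∑ k, pd i (fun y => pd j (fun z => h z k k) y) x)) := by
  have hx' : x 0 ≠ 0 := ne_of_gt hx
  have ev : (fun y => pd j (fun z => raise u z i j) y) =ᶠ[nhds x]
      (fun y => (((3 : ℝ) - n) * del j 0) *
          ((y 0) ^ ((2 : ℤ) - n) * (h y i j - del i j * ∑ k, h y k k))
        + (y 0) ^ ((3 : ℤ) - n) *
            (pd j (fun z => h z i j) y - del i j * ∑ k, pd j (fun z => h z k k) y)) := by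
    filter_upwards [isOpen_S.mem_nhds hx] with y hy
    rw [pd_raise h u hu hsmooth hy j i j]
    ring
  rw [pd_congr ev, pd_add
      (((diff_zpow_proj _ hx').fun_mul (diff_g h hsmooth i j hx)).const_mul _)
      ((diff_zpow_proj _ hx').fun_mul (diff_pg h hsmooth j i j hx)),
    pd_const_mul ((diff_zpow_proj _ hx').fun_mul (diff_g h hsmooth i j hx)),
    pd_mul (diff_zpow_proj _ hx') (diff_g h hsmooth i j hx),
    pd_mul (diff_zpow_proj _ hx') (diff_pg h hsmooth j i j hx),
    pd_zpow _ hx', pd_zpow _ hx',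
    pd_sub (diff_h h hsmooth i j hx) ((diff_sumhkk h hsmooth hx).const_mul _),
    pd_const_mul (diff_sumhkk h hsmooth hx),
    pd_sum Finset.univ (fun k z => h z k k) (fun k _ => diff_h h hsmooth k k hx),
    pd_sub (diff_pdh h hsmooth j i j hx) ((diff_sumpdh h hsmooth j hx).const_mul _),
    pd_const_mul (diff_sumpdh h hsmooth j hx),
    pd_sum Finset.univ (fun k z => pd j (fun w => h w k k) z)
      (fun k _ => diff_pdh h hsmooth j k k hx)]
  rw [show ((2 : ℤ) - n - 1) = ((1 : ℤ) - n) by ring,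
    show ((3 : ℤ) - n - 1) = ((2 : ℤ) - n) by ring,
    show (if i = 0 then (1:ℝ) else 0) = del i 0 from rfl]
  push_cast; ring

theorem zp3 (a : ℝ) : a ^ (3 : ℤ) = a ^ 3 := by
  rw [show (3:ℤ) = ((3:ℕ):ℤ) by norm_num, zpow_natCast]

-- RHS first piece summed
theorem sum_pd_pd_raise (u : (Fin n → ℝ) → Fin n → Fin n → ℝ)
    (hu : ∀ x i j, u x i j = ((x 0) ^ (n + 1))⁻¹ * (h x i j - trB h x * bmet x i j))
    (hsym : ∀ x i j, h x i j = h x j i)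
    (hsmooth : ∀ i j, ContDiffOn ℝ (⊤ : ℕ∞) (fun x => h x i j) {y : Fin n → ℝ | 0 < y 0})
    {x : Fin n → ℝ} (hx : 0 < x 0) :
    (∑ i, ∑ j, pd i (fun y => pd j (fun z => raise u z i j) y) x)
      = ((3 : ℝ) - n) * ((2 : ℝ) - n) * (x 0) ^ ((1 : ℤ) - n)
          * (h x 0 0 - ∑ k, h x k k)
        + 2 * (((3 : ℝ) - n) * (x 0) ^ ((2 : ℤ) - n))
          * ((∑ k, pd k (fun z => h z 0 k) x) - (∑ k, pd 0 (fun z => h z k k) x))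
        + (x 0) ^ ((3 : ℤ) - n) *
            ((∑ i, ∑ j, pd i (fun y => pd j (fun z => h z i j) y) x)
              - (∑ a, ∑ k, pd a (fun y => pd a (fun z => h z k k) y) x)) := by
  have hx' : x 0 ≠ 0 := ne_of_gt hx
  have key : ∀ i j : Fin n, pd i (fun y => pd j (fun z => raise u z i j) y) x
      = del j 0 * (((3 : ℝ) - n) * (((2 : ℝ) - n) * (x 0) ^ ((1 : ℤ) - n) * del i 0
              * (h x i j - del i j * ∑ k, h x k k)
            + (x 0) ^ ((2 : ℤ) - n) *
              (pd i (fun z => h z i j) x - del i j * ∑ k, pd i (fun z => h z k k) x)))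
        + del i 0 * (((3 : ℝ) - n) * (x 0) ^ ((2 : ℤ) - n) *
            (pd j (fun z => h z i j) x - del i j * ∑ k, pd j (fun z => h z k k) x))
        + del i j * (-((x 0) ^ ((3 : ℤ) - n)) *
            ∑ k, pd i (fun y => pd j (fun z => h z k k) y) x)
        + (x 0) ^ ((3 : ℤ) - n) * pd i (fun y => pd j (fun z => h z i j) y) x := by
    intro i j
    rw [pd_pd_raise h u hu hsmooth hx i j]
    ring
  rw [Finset.sum_congr rfl (fun i _ => Finset.sum_congr rfl (fun j _ => key i j))]
  rw [Finset.sum_congr rfl (fun i _ => sum_split4 _ _ _ _), sum_split4,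
    sum2_right (fun i j => ((3 : ℝ) - n) * (((2 : ℝ) - n) * (x 0) ^ ((1 : ℤ) - n) * del i 0
        * (h x i j - del i j * ∑ k, h x k k)
      + (x 0) ^ ((2 : ℤ) - n) *
        (pd i (fun z => h z i j) x - del i j * ∑ k, pd i (fun z => h z k k) x))),
    sum2_left (fun i j => ((3 : ℝ) - n) * (x 0) ^ ((2 : ℤ) - n) *
      (pd j (fun z => h z i j) x - del i j * ∑ k, pd j (fun z => h z k k) x)),
    sum2_diag (fun i j => -((x 0) ^ ((3 : ℤ) - n)) *
      ∑ k, pd i (fun y => pd j (fun z => h z k k) y) x)]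
  have e1 : (∑ i, ((3 : ℝ) - n) * (((2 : ℝ) - n) * (x 0) ^ ((1 : ℤ) - n) * del i 0
        * (h x i 0 - del i 0 * ∑ k, h x k k)
      + (x 0) ^ ((2 : ℤ) - n) *
        (pd i (fun z => h z i 0) x - del i 0 * ∑ k, pd i (fun z => h z k k) x)))
      = ((3 : ℝ) - n) * (((2 : ℝ) - n) * (x 0) ^ ((1 : ℤ) - n)
          * (h x 0 0 - ∑ k, h x k k))
        + ((3 : ℝ) - n) * (x 0) ^ ((2 : ℤ) - n)
          * ((∑ k, pd k (fun z => h z 0 k) x) - (∑ k, pd 0 (fun z => h z k k) x)) := by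
    have reshape : ∀ i : Fin n, ((3 : ℝ) - n) * (((2 : ℝ) - n) * (x 0) ^ ((1 : ℤ) - n) * del i 0
          * (h x i 0 - del i 0 * ∑ k, h x k k)
        + (x 0) ^ ((2 : ℤ) - n) *
          (pd i (fun z => h z i 0) x - del i 0 * ∑ k, pd i (fun z => h z k k) x))
        = del i 0 * (((3 : ℝ) - n) * ((2 : ℝ) - n) * (x 0) ^ ((1 : ℤ) - n)
              * (h x i 0 - del i 0 * ∑ k, h x k k)
            - ((3 : ℝ) - n) * (x 0) ^ ((2 : ℤ) - n) * ∑ k, pd i (fun z => h z k k) x)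
          + ((3 : ℝ) - n) * (x 0) ^ ((2 : ℤ) - n) * pd i (fun z => h z 0 i) x := by
      intro i
      rw [pdh_swap h hsym i i 0 x]
      ring
    rw [Finset.sum_congr rfl (fun i _ => reshape i), Finset.sum_add_distrib,
      sum_del_left 0 (fun i => ((3 : ℝ) - n) * ((2 : ℝ) - n) * (x 0) ^ ((1 : ℤ) - n)
          * (h x i 0 - del i 0 * ∑ k, h x k k)
        - ((3 : ℝ) - n) * (x 0) ^ ((2 : ℤ) - n) * ∑ k, pd i (fun z => h z k k) x),
      del_self, ← Finset.mul_sum]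
    ring
  have e2 : (∑ j, ((3 : ℝ) - n) * (x 0) ^ ((2 : ℤ) - n) *
      (pd j (fun z => h z 0 j) x - del (0 : Fin n) j * ∑ k, pd j (fun z => h z k k) x))
      = ((3 : ℝ) - n) * (x 0) ^ ((2 : ℤ) - n)
        * ((∑ k, pd k (fun z => h z 0 k) x) - (∑ k, pd 0 (fun z => h z k k) x)) := by
    have reshape : ∀ j : Fin n, ((3 : ℝ) - n) * (x 0) ^ ((2 : ℤ) - n) *
        (pd j (fun z => h z 0 j) x - del (0 : Fin n) j * ∑ k, pd j (fun z => h z k k) x)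
        = ((3 : ℝ) - n) * (x 0) ^ ((2 : ℤ) - n) * pd j (fun z => h z 0 j) x
          + del (0 : Fin n) j * (-(((3 : ℝ) - n) * (x 0) ^ ((2 : ℤ) - n))
              * ∑ k, pd j (fun z => h z k k) x) := by
      intro j; ring
    rw [Finset.sum_congr rfl (fun j _ => reshape j), Finset.sum_add_distrib,
      sum_del_right 0 (fun j => -(((3 : ℝ) - n) * (x 0) ^ ((2 : ℤ) - n))
        * ∑ k, pd j (fun z => h z k k) x), ← Finset.mul_sum]
    ring
  have e3 : (∑ i, -((x 0) ^ ((3 : ℤ) - n)) * ∑ k, pd i (fun y => pd i (fun z => h z k k) y) x)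
      = -((x 0) ^ ((3 : ℤ) - n)) * ∑ a, ∑ k, pd a (fun y => pd a (fun z => h z k k) y) x :=
    (Finset.mul_sum _ _ _).symm
  have e4 : (∑ i : Fin n, ∑ j, (x 0) ^ ((3 : ℤ) - n) * pd i (fun y => pd j (fun z => h z i j) y) x)
      = (x 0) ^ ((3 : ℤ) - n) * ∑ i, ∑ j, pd i (fun y => pd j (fun z => h z i j) y) x := by
    rw [Finset.mul_sum]
    exact Finset.sum_congr rfl (fun i _ => (Finset.mul_sum _ _ _).symm)
  rw [e1, e2, e3, e4]
  ring

-- RHS second piece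
theorem pd_inv_sum_raise (u : (Fin n → ℝ) → Fin n → Fin n → ℝ)
    (hu : ∀ x i j, u x i j = ((x 0) ^ (n + 1))⁻¹ * (h x i j - trB h x * bmet x i j))
    (hsmooth : ∀ i j, ContDiffOn ℝ (⊤ : ℕ∞) (fun x => h x i j) {y : Fin n → ℝ | 0 < y 0})
    {x : Fin n → ℝ} (hx : 0 < x 0) :
    pd 0 (fun y => (y 0)⁻¹ * ∑ i, raise u y i i) x
      = (1 - (n : ℝ)) * (((2 : ℝ) - n) * (x 0) ^ ((1 : ℤ) - n) * (∑ k, h x k k)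
          + (x 0) ^ ((2 : ℤ) - n) * (∑ k, pd 0 (fun z => h z k k) x)) := by
  have hx' : x 0 ≠ 0 := ne_of_gt hx
  have ev : (fun y => (y 0)⁻¹ * ∑ i, raise u y i i) =ᶠ[nhds x]
      (fun y => (1 - (n : ℝ)) * ((y 0) ^ ((2 : ℤ) - n) * ∑ k, h y k k)) := by
    filter_upwards [isOpen_S.mem_nhds hx] with y hy
    have hy' : y 0 ≠ 0 := ne_of_gt hy
    rw [sum_raise h u hu hy', show ((y 0 : ℝ))⁻¹ = (y 0) ^ (-1 : ℤ) from (zpow_neg_one _).symm,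
      ← mul_assoc, ← zpow_add₀ hy', show (-1 : ℤ) + ((3 : ℤ) - n) = ((2 : ℤ) - n) by ring]
    ring
  rw [pd_congr ev,
    pd_const_mul ((diff_zpow_proj _ hx').fun_mul (diff_sumhkk h hsmooth hx)),
    pd_mul (diff_zpow_proj _ hx') (diff_sumhkk h hsmooth hx), pd_zpow _ hx',
    pd_sum Finset.univ (fun k z => h z k k) (fun k _ => diff_h h hsmooth k k hx)]
  rw [show ((2 : ℤ) - n - 1) = ((1 : ℤ) - n) by ring]
  simp only [if_pos rfl]
  push_cast; ring

-- Recovery of h from u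
theorem recovery (hn : 2 ≤ n) (u : (Fin n → ℝ) → Fin n → Fin n → ℝ)
    (hu : ∀ x i j, u x i j = ((x 0) ^ (n + 1))⁻¹ * (h x i j - trB h x * bmet x i j))
    {x : Fin n → ℝ} (hx : 0 < x 0) (i j : Fin n) :
    h x i j = (x 0) ^ (n + 1) * (u x i j + (1 - (n : ℝ))⁻¹ * trB u x * bmet x i j) := by
  have hx' : x 0 ≠ 0 := ne_of_gt hx
  have h1n : (1 : ℝ) - n ≠ 0 := by
    have h2 : (2 : ℝ) ≤ n := by exact_mod_cast hn
    intro hcon; linarith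
  have sumu : (∑ k, u x k k) = ((x 0) ^ (n + 1))⁻¹ * ((1 - (n : ℝ)) * ∑ k, h x k k) := by
    rw [Finset.sum_congr rfl (fun k _ =>
      show u x k k = ((x 0) ^ (n + 1))⁻¹ * h x k k
          - ((x 0) ^ (n + 1))⁻¹ * ((∑ m, h x m m)) by
        rw [hu x k k, trB_fun, bmet, if_pos rfl]
        field_simp
        try ring), Finset.sum_sub_distrib, ← Finset.mul_sum, ← Finset.mul_sum,
      Finset.sum_const, Finset.card_univ, Fintype.card_fin, nsmul_eq_mul]
    push_cast; ring
  rw [trB_fun u x, sumu, hu x i j, trB_fun h x, bmet]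
  by_cases hij : i = j
  · simp only [hij, if_pos rfl]
    field_simp
    ring
  · simp only [if_neg hij]
    field_simp
    ring

end main


/-- With `u = (x¹)^{-(n+1)}(h - (tr_b h) b)` (components `u^{ij}` raised with `b`),
`P(h) = (x¹)^{n+1}(∂_i∂_j u^{ij} + ∂₁((x¹)⁻¹ u^{ii}))`, and
`h = (x¹)^{n+1}(u + (1-n)⁻¹ (tr_b u) b)`. -/
theorem P_in_good_variables {n : ℕ} [NeZero n] (hn : 2 ≤ n)
    (h : (Fin n → ℝ) → Fin n → Fin n → ℝ)
    (hsym : ∀ x i j, h x i j = h x j i)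
    (hsmooth : ∀ i j, ContDiffOn ℝ (⊤ : ℕ∞) (fun x => h x i j) {y : Fin n → ℝ | 0 < y 0})
    (u : (Fin n → ℝ) → Fin n → Fin n → ℝ)
    (hu : ∀ x i j, u x i j = ((x 0) ^ (n + 1))⁻¹ * (h x i j - trB h x * bmet x i j))
    (x : Fin n → ℝ) (hx : 0 < x 0) :
    Pop h x
        = (x 0) ^ (n + 1) *
            ((∑ i, ∑ j, pd i (fun y => pd j (fun z => raise u z i j) y) x)
              + pd 0 (fun y => (y 0)⁻¹ * ∑ i, raise u y i i) x)
      ∧ ∀ i j, h x i j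
          = (x 0) ^ (n + 1) * (u x i j + (1 - (n : ℝ))⁻¹ * trB u x * bmet x i j) := by
  have hx' : x 0 ≠ 0 := ne_of_gt hx
  refine ⟨?_, fun i j => recovery h hn u hu hx i j⟩
  rw [Pop, term1_eq h, sumDD h hx', sum_pd_covD h hsym hsmooth hx, sum_covD0 h hx',
    term2_eq h hsmooth hx, trB_fun h x,
    sum_pd_pd_raise h u hu hsym hsmooth hx, pd_inv_sum_raise h u hu hsmooth hx]
  have E0 : (x 0 : ℝ) ^ (-1 : ℤ) = (x 0)⁻¹ := zpow_neg_one (x 0)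
  have Em2 : (x 0 : ℝ) ^ (-2 : ℤ) = ((x 0) ^ 2)⁻¹ := by
    rw [show (-2:ℤ) = -(2:ℤ) by norm_num, zpow_neg, zp2]
  have E1 : (x 0 : ℝ) ^ ((1:ℤ) - n) = (x 0) / (x 0) ^ n := by
    rw [zpow_sub₀ hx', zpow_one, zpow_natCast]
  have E2 : (x 0 : ℝ) ^ ((2:ℤ) - n) = (x 0) ^ 2 / (x 0) ^ n := by
    rw [zpow_sub₀ hx', zp2, zpow_natCast]
  have E3 : (x 0 : ℝ) ^ ((3:ℤ) - n) = (x 0) ^ 3 / (x 0) ^ n := by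
    rw [zpow_sub₀ hx', zp3, zpow_natCast]
  rw [E0, Em2, E1, E2, E3]
  have hpn : (x 0 : ℝ) ^ n ≠ 0 := pow_ne_zero n hx'
  field_simp
  ring
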